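/- Removing a loop between two occurrences of the same node with the same accumulated inventory preserves validity: if x₁,…,xₙ is a valid inventory-driven path and i < j satisfy x_i = x_j and ⋃_{l ≤ i} obj(x_l) = ⋃_{l ≤ j} obj(x_l), then the path x₁,…,x_i, x_{j+1},…,xₙ is also valid, with the same endpoints and strictly smaller length. -/

import Mathlib

/-- Validity of an inventory-driven path (empty initial inventory). -/
def ValidPath {M I : Type*} (adj : M → Set M) (obj req : M → Set I)
    (σ : List M) : Prop :=
  σ.Chain' (fun a b => b ∈ adj a) ∧
  ∀ i (h : i < σ.length), req (σ.get ⟨i, h⟩) ⊆ ⋃ x ∈ σ.take i, obj x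

/-!
Write the path as `a ++ loop ++ b` with `a = x₁ … x_i` and `a ++ loop = x₁ … x_j`. Both prefixes
end at the same node and have accumulated the same inventory, so after cutting out `loop` the
step into `b` is still an edge and every node of `b` finds the same inventory in front of it as
before.
-/

section Excision

variable {M I : Type*}

def inventory (obj : M → Set I) (σ : List M) : Set I := ⋃ x ∈ σ, obj x

theorem inventory_append (obj : M → Set I) (a b : List M) :
    inventory obj (a ++ b) = inventory obj a ∪ inventory obj b := by
  ext y
  simp only [inventory, List.mem_append, Set.mem_iUnion, Set.mem_union, exists_prop, or_and_right,
    exists_or]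

def RequirementsMet (obj req : M → Set I) (S : Set I) (σ : List M) : Prop :=
  ∀ k (h : k < σ.length), req σ[k] ⊆ S ∪ inventory obj (σ.take k)

theorem requirementsMet_append {obj req : M → Set I} {S : Set I} {a b : List M} :
    RequirementsMet obj req S (a ++ b) ↔
      RequirementsMet obj req S a ∧ RequirementsMet obj req (S ∪ inventory obj a) b := by
  constructor
  · intro h
    refine ⟨fun k hk => ?_, fun k hk => ?_⟩
    · have := h k (by simp; omega)
      rwa [List.getElem_append_left hk, List.take_append, Nat.sub_eq_zero_of_le (by omega),
        List.take_zero, List.append_nil] at this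
    · rw [List.getElem_append_right' a hk, Set.union_assoc, ← inventory_append,
        ← List.take_length_add_append, Nat.add_comm a.length k]
      exact h _ _
  · rintro ⟨ha, hb⟩ k hk
    rcases lt_or_ge k a.length with hka | hka
    · rw [List.getElem_append_left hka, List.take_append, Nat.sub_eq_zero_of_le (by omega),
        List.take_zero, List.append_nil]
      exact ha k hka
    · obtain ⟨k, rfl⟩ := Nat.exists_eq_add_of_le hka
      rw [List.getElem_append_right hka, List.take_length_add_append, inventory_append,
        ← Set.union_assoc]
      simpa using hb k (by simp at hk; omega)

theorem validPath_iff {adj : M → Set M} {obj req : M → Set I} {σ : List M} :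
    ValidPath adj obj req σ ↔ σ.IsChain (fun a b => b ∈ adj a) ∧ RequirementsMet obj req ∅ σ := by
  simp only [ValidPath, RequirementsMet, inventory, List.get_eq_getElem, Set.empty_union]
  rfl

theorem ValidPath.excise {adj : M → Set M} {obj req : M → Set I} {a m b : List M}
    (h : ValidPath adj obj req (a ++ m ++ b)) (hlast : (a ++ m).getLast? = a.getLast?)
    (hinv : inventory obj (a ++ m) = inventory obj a) :
    ValidPath adj obj req (a ++ b) := by
  rw [validPath_iff] at h ⊢
  obtain ⟨hchain, hreq⟩ := h
  obtain ⟨ham, hb, hjoin⟩ := List.isChain_append.1 hchain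
  obtain ⟨ham_req, hb_req⟩ := requirementsMet_append.1 hreq
  refine ⟨ham.left_of_append.append hb (hlast ▸ hjoin), ?_⟩
  exact requirementsMet_append.2 ⟨(requirementsMet_append.1 ham_req).1, hinv ▸ hb_req⟩

theorem List.head?_append_append_of_getLast?_eq {a m b : List M}
    (hlast : (a ++ m).getLast? = a.getLast?) : (a ++ m ++ b).head? = (a ++ b).head? := by
  rcases a with _ | ⟨x, a⟩
  · obtain rfl : m = [] := by simpa using hlast
    rfl
  · rfl

theorem List.getLast?_append_append_of_getLast?_eq {a m b : List M}
    (hlast : (a ++ m).getLast? = a.getLast?) : (a ++ m ++ b).getLast? = (a ++ b).getLast? := by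
  rw [List.getLast?_append, hlast, ← List.getLast?_append]

end Excision

/-- Excising a loop between two occurrences of the same node with the same accumulated
inventory preserves validity and endpoints, and strictly decreases length. -/
theorem stmt_10 {M I : Type*} (adj : M → Set M) (obj req : M → Set I)
    (σ : List M) (hvalid : ValidPath adj obj req σ)
    (i j : ℕ) (hij : i < j) (hj : j < σ.length)
    (hnode : σ.get ⟨i, lt_trans hij hj⟩ = σ.get ⟨j, hj⟩)
    (hinv : (⋃ x ∈ σ.take (i + 1), obj x) = ⋃ x ∈ σ.take (j + 1), obj x) :
    ValidPath adj obj req (σ.take (i + 1) ++ σ.drop (j + 1)) ∧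
    (σ.take (i + 1) ++ σ.drop (j + 1)).head? = σ.head? ∧
    (σ.take (i + 1) ++ σ.drop (j + 1)).getLast? = σ.getLast? ∧
    (σ.take (i + 1) ++ σ.drop (j + 1)).length < σ.length := by
  set loop := (σ.drop (i + 1)).take (j - i)
  have hsplit : σ.take (j + 1) = σ.take (i + 1) ++ loop := by
    rw [← List.take_add]; congr 1; omega
  have hσ : σ = σ.take (i + 1) ++ loop ++ σ.drop (j + 1) := by
    rw [← hsplit, List.take_append_drop]
  have hlast : (σ.take (i + 1) ++ loop).getLast? = (σ.take (i + 1)).getLast? := by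
    simpa [← hsplit, List.getLast?_take, hj, lt_trans hij hj] using hnode.symm
  refine ⟨?_, ?_, ?_, ?_⟩
  · rw [hσ] at hvalid
    exact hvalid.excise hlast (by rw [← hsplit]; exact hinv.symm)
  · conv_rhs => rw [hσ]
    exact (List.head?_append_append_of_getLast?_eq hlast).symm
  · conv_rhs => rw [hσ]
    exact (List.getLast?_append_append_of_getLast?_eq hlast).symm
  · simp only [List.length_append, List.length_take, List.length_drop]
    omega
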